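/- Total conditioning characterization restricted to the independence direction: if y is not in the Markov blanket of x in a DAG G whose distribution P is Markov and faithful to G, then x ⊥ y | X∖{x,y}, where X is the full vertex set. -/

import Mathlib

/-!
Conditioning on every vertex other than `x` and `y` blocks each internal vertex of a trail
that is not a collider, so an active trail from `x` to `y` consists of colliders only. Two
adjacent colliders `a → b ← c` and `b → c ← d` would form the 2-cycle `b → c → b`, so the
trail has at most one internal vertex: it is an edge (`y` is a parent or child of `x`) or
`x → c ← y` (`y` is a spouse of `x`).
-/

/-- `G` is acyclic: no directed cycle (its transitive closure is irreflexive). -/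
def Acyclic {V : Type} (G : V → V → Prop) : Prop :=
  ∀ v, ¬ Relation.TransGen G v v

/-- The Markov blanket of `x`: parents, children, and spouses of `x`. -/
def MarkovBlanket {V : Type} (G : V → V → Prop) (x : V) : Set V :=
  {y | G y x ∨ G x y ∨ (y ≠ x ∧ ∃ c, G x c ∧ G y c)}

/-- `b` is a collider between `a` and `c`: edges `a → b` and `c → b`. -/
def Collider {V : Type} (G : V → V → Prop) (a b c : V) : Prop := G a b ∧ G c b

/-- A trail `w` is active given `Z`: consecutive vertices are joined by an edge
in some direction, every collider on the trail is in `Z`, and no other internal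
vertex is in `Z`. -/
def ActiveTrail {V : Type} (G : V → V → Prop) (Z : Set V) (k : ℕ)
    (w : Fin (k + 1) → V) : Prop :=
  Function.Injective w ∧
    (∀ i : Fin k, G (w i.castSucc) (w i.succ) ∨ G (w i.succ) (w i.castSucc)) ∧
    (∀ i j : Fin k, (j : ℕ) = (i : ℕ) + 1 →
      (Collider G (w i.castSucc) (w i.succ) (w j.succ) → w i.succ ∈ Z) ∧
      (¬ Collider G (w i.castSucc) (w i.succ) (w j.succ) → w i.succ ∉ Z))

/-- `x` and `y` are d-separated given `Z`: there is no active trail from `x`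
to `y` given `Z`. -/
def DSep {V : Type} (G : V → V → Prop) (x y : V) (Z : Set V) : Prop :=
  ¬ ∃ (k : ℕ) (w : Fin (k + 1) → V),
      w 0 = x ∧ w (Fin.last k) = y ∧ ActiveTrail G Z k w

variable {V : Type} {G : V → V → Prop}

theorem Acyclic.not_collider_of_collider (hG : Acyclic G) {a b c d : V}
    (hb : Collider G a b c) : ¬ Collider G b c d :=
  fun hc => hG b ((Relation.TransGen.single hc.1).tail hb.2)

theorem ActiveTrail.collider_of_endpoints {k : ℕ} {w : Fin (k + 1) → V}
    (hw : ActiveTrail G (Set.univ \ {w 0, w (Fin.last k)}) k w) (i j : Fin k)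
    (hij : (j : ℕ) = i + 1) : Collider G (w i.castSucc) (w i.succ) (w j.succ) := by
  by_contra hcol
  apply (hw.2.2 i j hij).2 hcol
  have hlast : i.succ ≠ Fin.last k := by
    rw [Ne, Fin.ext_iff, Fin.val_succ, Fin.val_last]
    omega
  simp only [Set.mem_sdiff, Set.mem_univ, Set.mem_insert_iff, Set.mem_singleton_iff,
    hw.1.eq_iff, true_and, not_or]
  exact ⟨Fin.succ_ne_zero i, hlast⟩

theorem stmt16_general {V : Type} (G : V → V → Prop) (hG : Acyclic G)
    (x y : V) (hxy : x ≠ y) (hyMB : y ∉ MarkovBlanket G x) :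
    DSep G x y (Set.univ \ {x, y}) := by
  rintro ⟨k, w, rfl, rfl, hw⟩
  rcases k with _ | _ | _ | k
  · exact hxy rfl
  · exact hyMB ((hw.2.1 0).elim (fun h => Or.inr (Or.inl h)) Or.inl)
  · obtain ⟨hx, hy⟩ := hw.collider_of_endpoints 0 1 rfl
    exact hyMB (Or.inr (Or.inr ⟨hxy.symm, _, hx, hy⟩))
  · exact hG.not_collider_of_collider (hw.collider_of_endpoints 0 1 rfl)
      (hw.collider_of_endpoints 1 2 rfl)

/-- In a finite DAG, if `y` is not in the Markov blanket of `x`,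
then `x` and `y` are d-separated given all the remaining vertices
(hence, for a distribution Markov and faithful to `G`, `x ⟂ y | X∖{x,y}`). -/
theorem stmt16 {V : Type} [Fintype V] (G : V → V → Prop) (hG : Acyclic G)
    (x y : V) (hxy : x ≠ y) (hyMB : y ∉ MarkovBlanket G x) :
    DSep G x y (Set.univ \ {x, y}) :=
  stmt16_general G hG x y hxy hyMB
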